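/- arXiv:2406.02734 — 3 statements merged into one kernel-verified Lean document; each statement's English description precedes it below -/
import Mathlib

section
/- Let Γ be an n×(2n) matrix over an infinite field K with nonzero columns. If for every column index j the matrix γⱼγⱼᵀ is a linear combination of the matrices γᵢγᵢᵀ for i ≠ j, then there exists an invertible diagonal matrix Λ of size 2n (all diagonal entries nonzero) such that Γ·Λ·Γᵀ = 0. -/
open Matrix

private lemma diag_sum_lemma {K : Type*} [Field K] {n : ℕ}
    (Γ : Matrix (Fin n) (Fin (2 * n)) K) (c : Fin (2 * n) → K) :
    Γ * Matrix.diagonal c * Γᵀ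
      = ∑ k, c k • Matrix.vecMulVec (Γᵀ k) (Γᵀ k) := by
  ext a b
  simp only [Matrix.mul_apply, Matrix.diagonal_apply, Matrix.transpose_apply,
    Finset.sum_apply, Matrix.sum_apply, Matrix.smul_apply, Matrix.vecMulVec_apply,
    smul_eq_mul, Finset.sum_ite_eq', Finset.mem_univ, if_true, mul_ite, mul_zero]
  apply Finset.sum_congr rfl
  intro k _
  ring

private lemma exists_ne_zero_at {K : Type*} [Field K] [Infinite K] {n : ℕ}
    (Γ : Matrix (Fin n) (Fin (2 * n)) K)
    (hspan : ∀ j, Matrix.vecMulVec (Γᵀ j) (Γᵀ j) ∈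
      Submodule.span K
        {M : Matrix (Fin n) (Fin n) K |
          ∃ i, i ≠ j ∧ M = Matrix.vecMulVec (Γᵀ i) (Γᵀ i)})
    (j : Fin (2 * n)) :
    ∃ c : Fin (2 * n) → K, c j ≠ 0 ∧ Γ * Matrix.diagonal c * Γᵀ = 0 := by
  classical
  have hset : {M : Matrix (Fin n) (Fin n) K |
      ∃ i, i ≠ j ∧ M = Matrix.vecMulVec (Γᵀ i) (Γᵀ i)}
      = (fun i => Matrix.vecMulVec (Γᵀ i) (Γᵀ i)) '' {i | i ≠ j} := by
    ext M
    constructor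
    · rintro ⟨i, hi, rfl⟩; exact ⟨i, hi, rfl⟩
    · rintro ⟨i, hi, rfl⟩; exact ⟨i, hi, rfl⟩
  have h := hspan j
  rw [hset, Finsupp.mem_span_image_iff_linearCombination] at h
  obtain ⟨l, hl, hsum⟩ := h
  refine ⟨fun k => if k = j then 1 else -(l k), by simp, ?_⟩
  rw [diag_sum_lemma]
  have hsum' : ∑ k, l k • Matrix.vecMulVec (Γᵀ k) (Γᵀ k)
      = Matrix.vecMulVec (Γᵀ j) (Γᵀ j) := by
    rw [← hsum, Finsupp.linearCombination_apply, Finsupp.sum]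
    rw [Finset.sum_subset (Finset.subset_univ l.support)]
    intro x _ hx
    simp [Finsupp.notMem_support_iff.mp hx]
  have hlj : l j = 0 := by
    by_contra hne
    exact (hl (Finsupp.mem_support_iff.mpr hne)) rfl
  calc ∑ k, (if k = j then (1:K) else -(l k)) • Matrix.vecMulVec (Γᵀ k) (Γᵀ k)
      = ∑ k, ((if k = j then (1:K) else 0) - l k) • Matrix.vecMulVec (Γᵀ k) (Γᵀ k) := by
        apply Finset.sum_congr rfl
        intro k _
        congr 1
        by_cases hk : k = j
        · subst hk; simp [hlj]
        · simp [hk]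
    _ = (∑ k, (if k = j then (1:K) else 0) • Matrix.vecMulVec (Γᵀ k) (Γᵀ k))
        - ∑ k, l k • Matrix.vecMulVec (Γᵀ k) (Γᵀ k) := by
        rw [← Finset.sum_sub_distrib]
        apply Finset.sum_congr rfl
        intro k _
        rw [sub_smul]
    _ = 0 := by
        rw [hsum']
        simp [ite_smul, Finset.sum_ite_eq']

theorem stmt_1 {K : Type*} [Field K] [Infinite K] {n : ℕ}
    (Γ : Matrix (Fin n) (Fin (2 * n)) K)
    (hcol : ∀ j, (Γᵀ j) ≠ 0)
    (hspan : ∀ j, Matrix.vecMulVec (Γᵀ j) (Γᵀ j) ∈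
      Submodule.span K
        {M : Matrix (Fin n) (Fin n) K |
          ∃ i, i ≠ j ∧ M = Matrix.vecMulVec (Γᵀ i) (Γᵀ i)}) :
    ∃ d : Fin (2 * n) → K, (∀ i, d i ≠ 0) ∧ Γ * Matrix.diagonal d * Γᵀ = 0 := by
  classical
  choose c hc hzero using exists_ne_zero_at Γ hspan
  -- polynomial whose nonvanishing point gives coefficients
  set P : MvPolynomial (Fin (2 * n)) K :=
    ∏ j, ∑ k, MvPolynomial.C (c k j) * MvPolynomial.X k with hP
  have hPne : P ≠ 0 := by
    apply Finset.prod_ne_zero_iff.mpr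
    intro j _
    intro hzero'
    have := congrArg (MvPolynomial.coeff (Finsupp.single j 1)) hzero'
    simp only [MvPolynomial.coeff_zero] at this
    apply hc j
    rw [← this]
    rw [MvPolynomial.coeff_sum]
    rw [Finset.sum_eq_single j]
    · simp [MvPolynomial.coeff_C_mul, MvPolynomial.coeff_X]
    · intro b _ hb
      simp only [MvPolynomial.coeff_C_mul]
      rw [MvPolynomial.coeff_X' b (Finsupp.single j 1)]
      rw [if_neg]
      · ring
      · intro hEq
        apply hb
        have := congrArg (fun f => f b) hEq
        simpa [Finsupp.single_apply, eq_comm] using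
          (Finsupp.single_left_injective one_ne_zero hEq.symm)
    · simp
  have hx : ∃ x : Fin (2 * n) → K, MvPolynomial.eval x P ≠ 0 := by
    by_contra hall
    push_neg at hall
    exact hPne (MvPolynomial.funext (fun x => by simp [hall x]))
  obtain ⟨x, hx⟩ := hx
  refine ⟨fun j => ∑ k, x k * c k j, ?_, ?_⟩
  · intro j
    rw [hP, MvPolynomial.eval_prod] at hx
    have := Finset.prod_ne_zero_iff.mp hx j (Finset.mem_univ j)
    simp only [MvPolynomial.eval_sum, MvPolynomial.eval_mul, MvPolynomial.eval_C,
      MvPolynomial.eval_X] at this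
    intro h0
    apply this
    rw [← h0]
    apply Finset.sum_congr rfl
    intro k _
    ring
  · rw [diag_sum_lemma]
    calc ∑ j, (∑ k, x k * c k j) • Matrix.vecMulVec (Γᵀ j) (Γᵀ j)
        = ∑ j, ∑ k, (x k * c k j) • Matrix.vecMulVec (Γᵀ j) (Γᵀ j) := by
          apply Finset.sum_congr rfl; intro j _; rw [Finset.sum_smul]
      _ = ∑ k, ∑ j, (x k * c k j) • Matrix.vecMulVec (Γᵀ j) (Γᵀ j) :=
          Finset.sum_comm
      _ = ∑ k, x k • ∑ j, c k j • Matrix.vecMulVec (Γᵀ j) (Γᵀ j) := by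
          apply Finset.sum_congr rfl; intro k _
          rw [Finset.smul_sum]
          apply Finset.sum_congr rfl; intro j _
          rw [smul_smul]
      _ = 0 := by
          apply Finset.sum_eq_zero; intro k _
          rw [← diag_sum_lemma, hzero k, smul_zero]
end

section
/- Let K be a field of characteristic ≠ 2 in which every element is a square, and let Γ be an n×(2n) matrix whose first n columns form an invertible matrix and for which there exists an invertible diagonal Λ with Γ·Λ·Γᵀ = 0. Then there exist an invertible matrix A ∈ GL(n, K), an invertible diagonal matrix D ∈ GL(2n, K), and an orthogonal matrix P ∈ K^{n×n} with P·Pᵀ = Iₙ, such that A·Γ·D = [Iₙ | P]. -/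
/-!
Scale the columns of `[Γ₁ | Γ₂]` by square roots of the entries `d (inl i)` and `-d (inr j)`.
The scaled matrix `[B | C]` then satisfies `B Bᵀ = C Cᵀ`, which is `Γ diag(d) Γᵀ = 0` rewritten,
so `B⁻¹ [B | C] = [I | B⁻¹ C]` with `B⁻¹ C` orthogonal.
-/

open Matrix

namespace Matrix

variable {R m n₁ n₂ : Type*} [Fintype n₁] [Fintype n₂] [DecidableEq n₁]

lemma fromCols_mul_diagonal [DecidableEq n₂] [Semiring R]
    (A₁ : Matrix m n₁ R) (A₂ : Matrix m n₂ R) (d : n₁ ⊕ n₂ → R) :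
    fromCols A₁ A₂ * diagonal d =
      fromCols (A₁ * diagonal (d ∘ Sum.inl)) (A₂ * diagonal (d ∘ Sum.inr)) := by
  ext _ (_ | _) <;> simp [mul_diagonal]

lemma fromCols_mul_diagonal_mul_transpose [DecidableEq n₂] [Semiring R]
    (A₁ : Matrix m n₁ R) (A₂ : Matrix m n₂ R) (d : n₁ ⊕ n₂ → R) :
    fromCols A₁ A₂ * diagonal d * (fromCols A₁ A₂)ᵀ =
      A₁ * diagonal (d ∘ Sum.inl) * A₁ᵀ + A₂ * diagonal (d ∘ Sum.inr) * A₂ᵀ := by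
  rw [fromCols_mul_diagonal, transpose_fromCols, fromCols_mul_fromRows]

lemma mul_diagonal_sq_mul_transpose [CommSemiring R] (M : Matrix m n₁ R) (e : n₁ → R) :
    M * diagonal (fun i => e i ^ 2) * Mᵀ = M * diagonal e * (M * diagonal e)ᵀ := by
  rw [transpose_mul, diagonal_transpose, ← Matrix.mul_assoc, Matrix.mul_assoc M (diagonal e),
    diagonal_mul_diagonal]
  simp only [sq]

variable [CommRing R] {B : Matrix n₁ n₁ R}

lemma inv_mul_fromCols_self (hB : IsUnit B.det) (C : Matrix n₁ m R) :
    B⁻¹ * fromCols B C = fromCols 1 (B⁻¹ * C) := by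
  rw [mul_fromCols, nonsing_inv_mul B hB]

lemma inv_mul_mul_transpose_eq_one {C : Matrix n₁ n₂ R} (hB : IsUnit B.det)
    (h : C * Cᵀ = B * Bᵀ) :
    B⁻¹ * C * (B⁻¹ * C)ᵀ = 1 :=
  calc B⁻¹ * C * (B⁻¹ * C)ᵀ = B⁻¹ * (C * Cᵀ) * Bᵀ⁻¹ := by
        simp only [transpose_mul, transpose_nonsing_inv, Matrix.mul_assoc]
    _ = B⁻¹ * B * (Bᵀ * Bᵀ⁻¹) := by simp only [h, Matrix.mul_assoc]
    _ = 1 := by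
        rw [nonsing_inv_mul B hB, mul_nonsing_inv Bᵀ (by rwa [det_transpose]), Matrix.one_mul]

end Matrix

theorem stmt_12_general {K : Type*} [Field K] {n : ℕ}
    (hsq : ∀ a : K, ∃ b : K, b ^ 2 = a)
    (Γ₁ Γ₂ : Matrix (Fin n) (Fin n) K) (hΓ₁ : IsUnit Γ₁.det)
    (d : Fin n ⊕ Fin n → K) (hd : ∀ i, d i ≠ 0)
    (hΓ : (Matrix.fromCols Γ₁ Γ₂) * Matrix.diagonal d *
      (Matrix.fromCols Γ₁ Γ₂)ᵀ = 0) :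
    ∃ (A : Matrix (Fin n) (Fin n) K) (e : Fin n ⊕ Fin n → K)
      (P : Matrix (Fin n) (Fin n) K),
      IsUnit A.det ∧ (∀ i, e i ≠ 0) ∧ P * Pᵀ = 1 ∧
        A * (Matrix.fromCols Γ₁ Γ₂) * Matrix.diagonal e =
          Matrix.fromCols 1 P := by
  choose r hr using hsq
  have hr₀ : ∀ a, a ≠ 0 → r a ≠ 0 := fun a ha h => ha (by rw [← hr a, h, zero_pow two_ne_zero])
  set e : Fin n ⊕ Fin n → K := Sum.elim (fun i => r (d (.inl i))) (fun j => r (-d (.inr j)))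
  have he : ∀ k, e k ≠ 0 := by
    rintro (i | j)
    exacts [hr₀ _ (hd _), hr₀ _ (neg_ne_zero.2 (hd _))]
  set B := Γ₁ * diagonal (e ∘ Sum.inl)
  set C := Γ₂ * diagonal (e ∘ Sum.inr)
  have hB : IsUnit B.det := by
    rw [det_mul, det_diagonal]
    exact hΓ₁.mul (Finset.prod_ne_zero_iff.2 fun i _ => he (.inl i)).isUnit
  have hBC : C * Cᵀ = B * Bᵀ := by
    have h₁ : (fun i => (e ∘ Sum.inl) i ^ 2) = d ∘ Sum.inl := funext fun i => hr _
    have h₂ : (fun j => (e ∘ Sum.inr) j ^ 2) = fun j => -d (.inr j) :=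
      funext fun j => hr _
    rw [fromCols_mul_diagonal_mul_transpose] at hΓ
    rw [← mul_diagonal_sq_mul_transpose, ← mul_diagonal_sq_mul_transpose, h₁, h₂, ← diagonal_neg,
      mul_neg, neg_mul, neg_eq_iff_eq_neg]
    exact (neg_eq_of_add_eq_zero_right hΓ).symm
  refine ⟨B⁻¹, e, B⁻¹ * C, isUnit_nonsing_inv_det B hB, he,
    inv_mul_mul_transpose_eq_one hB hBC, ?_⟩
  rw [Matrix.mul_assoc, fromCols_mul_diagonal, inv_mul_fromCols_self hB]

theorem stmt_12 {K : Type*} [Field K] {n : ℕ}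
    (hchar : (2 : K) ≠ 0) (hsq : ∀ a : K, ∃ b : K, b ^ 2 = a)
    (Γ₁ Γ₂ : Matrix (Fin n) (Fin n) K) (hΓ₁ : IsUnit Γ₁.det)
    (d : Fin n ⊕ Fin n → K) (hd : ∀ i, d i ≠ 0)
    (hΓ : (Matrix.fromCols Γ₁ Γ₂) * Matrix.diagonal d *
      (Matrix.fromCols Γ₁ Γ₂)ᵀ = 0) :
    ∃ (A : Matrix (Fin n) (Fin n) K) (e : Fin n ⊕ Fin n → K)
      (P : Matrix (Fin n) (Fin n) K),
      IsUnit A.det ∧ (∀ i, e i ≠ 0) ∧ P * Pᵀ = 1 ∧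
        A * (Matrix.fromCols Γ₁ Γ₂) * Matrix.diagonal e =
          Matrix.fromCols 1 P :=
  stmt_12_general hsq Γ₁ Γ₂ hΓ₁ d hd hΓ
end

section
/- Let P, P' ∈ O(n, K) be orthogonal matrices over a field K, and suppose there exist A ∈ GL(n, K) and an invertible diagonal matrix D ∈ GL(2n, K) such that A·[Iₙ | P]·D = [Iₙ | P']. Then P' = E·P·E' for some diagonal matrices E, E' with diagonal entries ±1; in particular if A = Iₙ then P' is obtained from P by multiplying columns by ±1. -/
/-!
Write `D = diag(a, b)`. The first `n` columns give `A * diagonal a = 1`, so `A = diagonal a⁻¹` and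
`P' = diagonal a⁻¹ * P * diagonal b`. Orthogonality of `P` and `P'` then yields
`P * diagonal (b * b) = diagonal (a * a) * P`, i.e. `bⱼ² = aᵢ²` whenever `Pᵢⱼ ≠ 0`.
Choose for every `x` a root `s x` of `x * x` depending only on `x * x`; then `s bⱼ = s aᵢ` on the
support of `P`, and there `aᵢ⁻¹ bⱼ = (s aᵢ / aᵢ) (s bⱼ / bⱼ)`, a product of two signs.
-/

open Matrix

section SquareClassRep

variable {K : Type*} [Field K]

/-- A root of `x * x` chosen as a function of `x * x` alone, hence equal for `x` and `-x`. -/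
noncomputable def squareClassRep (x : K) : K :=
  Function.invFun (fun r : K => r * r) (x * x)

lemma squareClassRep_mul_self (x : K) : squareClassRep x * squareClassRep x = x * x :=
  Function.invFun_eq (f := fun r : K => r * r) ⟨x, rfl⟩

lemma squareClassRep_eq_of_mul_self_eq {x y : K} (h : x * x = y * y) :
    squareClassRep x = squareClassRep y := by
  rw [squareClassRep, squareClassRep, h]

lemma squareClassRep_div_self_eq_one_or_eq_neg_one {x : K} (hx : x ≠ 0) :
    squareClassRep x / x = 1 ∨ squareClassRep x / x = -1 := by
  rcases (mul_self_eq_mul_self_iff.mp (squareClassRep_mul_self x)) with h | h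
  · exact Or.inl (by rw [h, div_self hx])
  · exact Or.inr (by rw [h, neg_div, div_self hx])

end SquareClassRep

lemma Matrix.fromCols_mul_diagonal_s13 {R m n₁ n₂ : Type*} [Semiring R]
    [Fintype n₁] [Fintype n₂] [DecidableEq n₁] [DecidableEq n₂]
    (B : Matrix m n₁ R) (C : Matrix m n₂ R) (d : n₁ ⊕ n₂ → R) :
    fromCols B C * diagonal d =
      fromCols (B * diagonal (fun i => d (Sum.inl i)))
        (C * diagonal (fun j => d (Sum.inr j))) := by
  ext i (j | j) <;> simp [mul_diagonal]

lemma Matrix.eq_diagonal_inv_of_mul_diagonal_eq_one {K n : Type*} [Field K] [Fintype n]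
    [DecidableEq n] {A : Matrix n n K} {a : n → K} (ha : ∀ i, a i ≠ 0)
    (h : A * diagonal a = 1) : A = diagonal a⁻¹ := by
  have hinv : diagonal a * diagonal a⁻¹ = 1 := by
    rw [diagonal_mul_diagonal, ← diagonal_one]
    exact congrArg diagonal (funext fun i => mul_inv_cancel₀ (ha i))
  calc A = A * diagonal a * diagonal a⁻¹ := by rw [Matrix.mul_assoc, hinv, Matrix.mul_one]
    _ = diagonal a⁻¹ := by rw [h, Matrix.one_mul]

lemma Matrix.mul_diagonal_mul_self_eq_diagonal_mul_self_mul {R n : Type*} [CommRing R]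
    [Fintype n] [DecidableEq n]
    {P A : Matrix n n R} {a b : n → R} (hP : P * Pᵀ = 1) (hA : diagonal a * A = 1)
    (hAPb : (A * P * diagonal b) * (A * P * diagonal b)ᵀ = 1) :
    P * diagonal (b * b) = diagonal (a * a) * P := by
  have hAt : Aᵀ * diagonal a = 1 := by
    rw [← diagonal_transpose, ← transpose_mul, hA, transpose_one]
  have hPbbP : P * diagonal (b * b) * Pᵀ = diagonal (a * a) :=
    calc P * diagonal (b * b) * Pᵀ
        = (diagonal a * A) * P * (diagonal b * diagonal b) * Pᵀ * (Aᵀ * diagonal a) := by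
          rw [hA, hAt, diagonal_mul_diagonal, Matrix.one_mul, Matrix.mul_one]; rfl
      _ = diagonal a * ((A * P * diagonal b) * (A * P * diagonal b)ᵀ) * diagonal a := by
          simp only [transpose_mul, diagonal_transpose, Matrix.mul_assoc]
      _ = diagonal (a * a) := by
          rw [hAPb, Matrix.mul_one, diagonal_mul_diagonal]; rfl
  calc P * diagonal (b * b) = P * diagonal (b * b) * (Pᵀ * P) := by
        rw [mul_eq_one_comm.mp hP, Matrix.mul_one]
    _ = diagonal (a * a) * P := by rw [← hPbbP]; simp only [Matrix.mul_assoc]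

lemma Matrix.eq_of_mul_diagonal_eq_diagonal_mul {R m n : Type*} [CommRing R] [IsDomain R]
    [Fintype m] [Fintype n] [DecidableEq m] [DecidableEq n] {P : Matrix m n R} {a : m → R}
    {b : n → R} (h : P * diagonal b = diagonal a * P) {i : m} {j : n} (hij : P i j ≠ 0) :
    b j = a i := by
  have := congrFun (congrFun h i) j
  rw [mul_diagonal, diagonal_mul, mul_comm] at this
  exact mul_right_cancel₀ hij this

lemma Matrix.exists_sign_diagonal_eq_diagonal_inv_mul_mul_diagonal {K m n : Type*} [Field K]
    [Fintype m] [Fintype n] [DecidableEq m] [DecidableEq n] {P : Matrix m n K} {a : m → K}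
    {b : n → K} (ha : ∀ i, a i ≠ 0) (hb : ∀ j, b j ≠ 0)
    (hab : ∀ i j, P i j ≠ 0 → b j * b j = a i * a i) :
    ∃ (e : m → K) (e' : n → K),
      (∀ i, e i = 1 ∨ e i = -1) ∧ (∀ j, e' j = 1 ∨ e' j = -1) ∧
      diagonal a⁻¹ * P * diagonal b = diagonal e * P * diagonal e' := by
  refine ⟨fun i => squareClassRep (a i) / a i, fun j => squareClassRep (b j) / b j,
    fun i => squareClassRep_div_self_eq_one_or_eq_neg_one (ha i),
    fun j => squareClassRep_div_self_eq_one_or_eq_neg_one (hb j), ?_⟩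
  ext i j
  simp only [mul_diagonal, diagonal_mul, Pi.inv_apply]
  by_cases hij : P i j = 0
  · simp [hij]
  have hsq := hab i j hij
  have hrep : squareClassRep (b j) = squareClassRep (a i) :=
    squareClassRep_eq_of_mul_self_eq hsq
  have hrep_sq := squareClassRep_mul_self (a i)
  rw [hrep]
  field_simp [ha i, hb j]
  linear_combination hsq - hrep_sq

theorem stmt_13_general {K : Type*} [Field K] {n : ℕ}
    (P P' : Matrix (Fin n) (Fin n) K)
    (hP : P * Pᵀ = 1) (hP' : P' * P'ᵀ = 1)
    (A : Matrix (Fin n) (Fin n) K)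
    (d : Fin n ⊕ Fin n → K) (hd : ∀ i, d i ≠ 0)
    (h : A * (Matrix.fromCols (1 : Matrix (Fin n) (Fin n) K) P) *
        Matrix.diagonal d = Matrix.fromCols 1 P') :
    ∃ e e' : Fin n → K,
      (∀ i, e i = 1 ∨ e i = -1) ∧ (∀ i, e' i = 1 ∨ e' i = -1) ∧
        P' = Matrix.diagonal e * P * Matrix.diagonal e' := by
  set a : Fin n → K := fun i => d (Sum.inl i)
  set b : Fin n → K := fun j => d (Sum.inr j)
  rw [Matrix.mul_fromCols, Matrix.mul_one, Matrix.fromCols_mul_diagonal_s13, fromCols_ext_iff] at h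
  obtain ⟨hAa, hAPb⟩ := h
  have hA : A = diagonal a⁻¹ := eq_diagonal_inv_of_mul_diagonal_eq_one (fun i => hd _) hAa
  have hPab : P * diagonal (b * b) = diagonal (a * a) * P :=
    mul_diagonal_mul_self_eq_diagonal_mul_self_mul hP (mul_eq_one_comm.mp hAa) (hAPb ▸ hP')
  obtain ⟨e, e', he, he', hee'⟩ :=
    exists_sign_diagonal_eq_diagonal_inv_mul_mul_diagonal (P := P) (fun i => hd _)
      (fun j => hd _) (fun _ _ hij => eq_of_mul_diagonal_eq_diagonal_mul hPab hij)
  exact ⟨e, e', he, he', by rw [← hAPb, hA, hee']⟩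

theorem stmt_13 {K : Type*} [Field K] {n : ℕ}
    (hchar : (2 : K) ≠ 0)
    (P P' : Matrix (Fin n) (Fin n) K)
    (hP : P * Pᵀ = 1) (hP' : P' * P'ᵀ = 1)
    (A : Matrix (Fin n) (Fin n) K) (hA : IsUnit A.det)
    (d : Fin n ⊕ Fin n → K) (hd : ∀ i, d i ≠ 0)
    (h : A * (Matrix.fromCols (1 : Matrix (Fin n) (Fin n) K) P) *
        Matrix.diagonal d = Matrix.fromCols 1 P') :
    ∃ e e' : Fin n → K,
      (∀ i, e i = 1 ∨ e i = -1) ∧ (∀ i, e' i = 1 ∨ e' i = -1) ∧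
        P' = Matrix.diagonal e * P * Matrix.diagonal e' :=
  stmt_13_general P P' hP hP' A d hd h
end
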